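/- arXiv:math/9807103 — 3 statements merged into one kernel-verified Lean document; each statement's English description precedes it below -/
import Mathlib

section
/- Let π : E → X be a locally trivial topological ℂ-vector bundle of finite rank over a paracompact Hausdorff space X, let S ⊆ X be a closed subset, let U be an open neighbourhood of S in X that is paracompact, and let r : U × [0,1] → U be a strong deformation retraction of U onto S. Then there exists a strong deformation retraction ρ : π^{-1}(U) × [0,1] → π^{-1}(U) of π^{-1}(U) onto π^{-1}(S) such that π(ρ(e,t)) = r(π(e),t) for all e ∈ π^{-1}(U) and t ∈ [0,1], and such that for each x ∈ U the time-1 map restricted to the fibre, E_x → E_{r(x,1)}, is a ℂ-linear isomorphism. -/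
set_option linter.unusedSectionVars false
set_option linter.unusedVariables false
set_option maxHeartbeats 1000000


open unitInterval Bundle Set

noncomputable section

/-- clamp of the grid point `s` into the interval `[a,b]`. -/
def cmap (s a b : I) : I := min (max s a) b

theorem cmap_self (s a : I) : cmap s a a = a :=
  min_eq_right (le_max_right _ _)

theorem cmap_zero {a b : I} (hab : a ≤ b) : cmap 0 a b = a := by
  rw [cmap, max_eq_right (show (0:I) ≤ a from a.2.1), min_eq_left hab]

theorem cmap_one (a b : I) : cmap 1 a b = b := by
  rw [cmap, max_eq_left (show a ≤ (1:I) from a.2.2), min_eq_right (show b ≤ (1:I) from b.2.2)]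

theorem cmap_mono_left {s s' : I} (h : s ≤ s') (a b : I) : cmap s a b ≤ cmap s' a b :=
  min_le_min (max_le_max h le_rfl) le_rfl

theorem cmap_eq_of_lt {s s' : I} {a b : I} (h : s < a) (h' : s' < a) :
    cmap s a b = cmap s' a b := by
  rw [cmap, cmap, max_eq_right h.le, max_eq_right h'.le]

theorem cmap_eq_of_lt' {s s' : I} {a b : I} (h : b < s) (h' : b < s') :
    cmap s a b = cmap s' a b := by
  rw [cmap, cmap, min_eq_right (h.le.trans (le_max_left _ _)),
    min_eq_right (h'.le.trans (le_max_left _ _))]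

theorem cmap_mem_Icc {s₁ s₂ a b : I} (hs : s₁ ≤ s₂) (hab : a ≤ b)
    (h1 : a ≤ s₂) (h2 : s₁ ≤ b) : cmap s₁ a b ∈ Icc s₁ s₂ := by
  constructor
  · exact le_min (le_max_left _ _) h2
  · exact min_le_of_left_le (max_le hs h1)

theorem cmap_mem_Icc' {s₁ s₂ a b : I} (hs : s₁ ≤ s₂) (hab : a ≤ b)
    (h1 : a ≤ s₂) (h2 : s₁ ≤ b) : cmap s₂ a b ∈ Icc s₁ s₂ := by
  constructor
  · rcases le_total (max s₂ a) b with h | h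
    · rw [cmap, min_eq_left h]; exact hs.trans (le_max_left _ _)
    · rw [cmap, min_eq_right h]; exact h2
  · exact min_le_of_left_le (max_le le_rfl h1)

theorem cmap_eq_left_boundary {s₁ s₂ a b : I} (hs : s₁ ≤ s₂) (ha : a = s₂) :
    cmap s₁ a b = cmap s₂ a b := by
  rw [cmap, cmap, max_eq_right (ha ▸ hs), max_eq_right ha.ge]

theorem cmap_eq_right_boundary {s₁ s₂ a b : I} (hs : s₁ ≤ s₂) (hb : b = s₁) :
    cmap s₁ a b = cmap s₂ a b := by
  rw [cmap, cmap, min_eq_right (hb.le.trans (le_max_left _ _)),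
    min_eq_right ((hb.le.trans hs).trans (le_max_left _ _))]

end

open unitInterval Bundle Set

noncomputable section

section ChartTr

variable {X : Type*} [TopologicalSpace X]
  {F : Type*} [NormedAddCommGroup F] [NormedSpace ℂ F]
  {E : X → Type*} [∀ x, AddCommGroup (E x)] [∀ x, Module ℂ (E x)]
  [∀ x, TopologicalSpace (E x)] [TopologicalSpace (TotalSpace F E)]
  [FiberBundle F E] [VectorBundle ℂ F E]

/-- Transport within a single trivialization chart: move a point of the total space to the fibre
over `x'` keeping its chart coordinates. -/
def chartTr (T : Trivialization F (TotalSpace.proj : TotalSpace F E → X)) (x' : X)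
    (e : TotalSpace F E) : TotalSpace F E :=
  TotalSpace.mk x' (T.symm x' (T e).2)

@[simp] theorem chartTr_proj (T : Trivialization F (TotalSpace.proj : TotalSpace F E → X))
    (x' : X) (e : TotalSpace F E) : (chartTr T x' e).proj = x' := rfl

theorem chartTr_self (T : Trivialization F (TotalSpace.proj : TotalSpace F E → X))
    (e : TotalSpace F E) (he : e.proj ∈ T.baseSet) : chartTr T e.proj e = e := by
  obtain ⟨b, v⟩ := e
  simp only [chartTr]
  congr 1
  exact T.symm_apply_apply_mk he v

/-- `chartTr` as a linear isomorphism between fibres. -/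
def chartTrEquiv (T : Trivialization F (TotalSpace.proj : TotalSpace F E → X))
    [T.IsLinear ℂ] {x x' : X} (hx : x ∈ T.baseSet) (hx' : x' ∈ T.baseSet) :
    E x ≃ₗ[ℂ] E x' :=
  ((T.continuousLinearEquivAt ℂ x hx).trans
    (T.continuousLinearEquivAt ℂ x' hx').symm).toLinearEquiv

theorem chartTr_mk (T : Trivialization F (TotalSpace.proj : TotalSpace F E → X))
    [T.IsLinear ℂ] {x x' : X} (hx : x ∈ T.baseSet) (hx' : x' ∈ T.baseSet) (v : E x) :
    chartTr T x' (TotalSpace.mk x v) = TotalSpace.mk x' (chartTrEquiv T hx hx' v) := by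
  simp only [chartTr, chartTrEquiv]
  rfl

theorem chartTr_continuousOn (T : Trivialization F (TotalSpace.proj : TotalSpace F E → X)) :
    ContinuousOn (fun p : TotalSpace F E × X => chartTr T p.2 p.1)
      {p : TotalSpace F E × X | p.1.proj ∈ T.baseSet ∧ p.2 ∈ T.baseSet} := by
  have h1 : ContinuousOn (fun p : TotalSpace F E × X => (p.2, (T p.1).2))
      {p : TotalSpace F E × X | p.1.proj ∈ T.baseSet ∧ p.2 ∈ T.baseSet} := by
    apply ContinuousOn.prodMk continuousOn_snd
    have := T.continuousOn
    exact ((this.comp continuousOn_fst (fun p hp => T.mem_source.2 hp.1)).snd)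
  have h2 := T.continuousOn_symm
  refine h2.comp h1 ?_
  rintro p ⟨_, hp2⟩
  exact ⟨hp2, trivial⟩

end ChartTr


open unitInterval Bundle Set

noncomputable section

section Transport

variable {X B : Type*} [TopologicalSpace X] [TopologicalSpace B]
  {F : Type*} [NormedAddCommGroup F] [NormedSpace ℂ F]
  {E : X → Type*} [∀ x, AddCommGroup (E x)] [∀ x, Module ℂ (E x)]
  [∀ x, TopologicalSpace (E x)] [TopologicalSpace (TotalSpace F E)]
  [FiberBundle F E] [VectorBundle ℂ F E]

/-- Transport data for the pulled-back bundle along `q` over a set `V` of parameters. -/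
structure VBTransport (q : B × I → X) (V : Set B) : Type _ where
  g : TotalSpace F E → B → I → I → TotalSpace F E
  proj_eq : ∀ e z a b, z ∈ V → TotalSpace.proj e = q (z, a) → a ≤ b →
      TotalSpace.proj (g e z a b) = q (z, b)
  self : ∀ e z a, z ∈ V → TotalSpace.proj e = q (z, a) → g e z a a = e
  linear : ∀ z, z ∈ V → ∀ a b, a ≤ b → ∃ L : E (q (z, a)) ≃ₗ[ℂ] E (q (z, b)),
      ∀ v : E (q (z, a)), g (TotalSpace.mk (q (z, a)) v) z a b = TotalSpace.mk (q (z, b)) (L v)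
  const : ∀ e z a b, z ∈ V → TotalSpace.proj e = q (z, a) → a ≤ b →
      (∀ s s' : I, q (z, s) = q (z, s')) → g e z a b = e
  cont : ContinuousOn (fun p : TotalSpace F E × B × I × I => g p.1 p.2.1 p.2.2.1 p.2.2.2)
      {p : TotalSpace F E × B × I × I |
        p.2.1 ∈ V ∧ TotalSpace.proj p.1 = q (p.2.1, p.2.2.1) ∧ p.2.2.1 ≤ p.2.2.2}

variable {q : B × I → X}

/-- Restriction of transport data to a smaller set. -/
def VBTransport.restrict {V : Set B} (S : VBTransport (E := E) (F := F) q V) {V' : Set B}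
    (h : V' ⊆ V) : VBTransport (E := E) (F := F) q V' where
  g := S.g
  proj_eq e z a b hz := S.proj_eq e z a b (h hz)
  self e z a hz := S.self e z a (h hz)
  linear z hz := S.linear z (h hz)
  const e z a b hz := S.const e z a b (h hz)
  cont := S.cont.mono (fun p hp => ⟨h hp.1, hp.2⟩)

end Transport

section Chain

variable {X B : Type*} [TopologicalSpace X] [TopologicalSpace B]
  {F : Type*} [NormedAddCommGroup F] [NormedSpace ℂ F]
  {E : X → Type*} [∀ x, AddCommGroup (E x)] [∀ x, Module ℂ (E x)]
  [∀ x, TopologicalSpace (E x)] [TopologicalSpace (TotalSpace F E)]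
  [FiberBundle F E] [VectorBundle ℂ F E]

variable (q : B × I → X) (T : ℕ → Trivialization F (TotalSpace.proj : TotalSpace F E → X))
  (t : ℕ → I)

/-- Iterated chart transport along a grid. -/
def chainA : ℕ → TotalSpace F E × B × I × I → TotalSpace F E
  | 0 => fun p => p.1
  | n+1 => fun p =>
      if p.2.2.1 ≤ t (n+1) ∧ t n ≤ p.2.2.2 then
        chartTr (T n) (q (p.2.1, cmap (t (n+1)) p.2.2.1 p.2.2.2)) (chainA n p)
      else chainA n p

variable {q T t}
variable {V : Set B} {m : ℕ}

/-- The domain of validity of the chain construction. -/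
def chainD (q : B × I → X) (V : Set B) : Set (TotalSpace F E × B × I × I) :=
  {p | p.2.1 ∈ V ∧ TotalSpace.proj p.1 = q (p.2.1, p.2.2.1) ∧ p.2.2.1 ≤ p.2.2.2}

theorem chainA_proj (ht0 : t 0 = 0) (hmono : Monotone t)
    (hbase : ∀ n, n < m → ∀ z ∈ V, ∀ s : I, s ∈ Icc (t n) (t (n+1)) → q (z, s) ∈ (T n).baseSet) :
    ∀ n, n ≤ m → ∀ p ∈ chainD (E := E) (F := F) q V,
      TotalSpace.proj (chainA q T t n p) = q (p.2.1, cmap (t n) p.2.2.1 p.2.2.2) := by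
  intro n
  induction n with
  | zero => intro _ p hp; rw [ht0, cmap_zero hp.2.2]; exact hp.2.1
  | succ n ih =>
    intro hnm p hp
    have hn : n ≤ m := (Nat.le_succ n).trans hnm
    simp only [chainA]
    by_cases hc : p.2.2.1 ≤ t (n+1) ∧ t n ≤ p.2.2.2
    · rw [if_pos hc]; rfl
    · rw [if_neg hc, ih hn p hp]
      rcases not_and_or.mp hc with h | h
      · push_neg at h
        exact congrArg (fun s => q (p.2.1, s))
          (cmap_eq_of_lt ((hmono (Nat.le_succ n)).trans_lt h) h)
      · push_neg at h
        exact congrArg (fun s => q (p.2.1, s))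
          (cmap_eq_of_lt' h (h.trans_le (hmono (Nat.le_succ n))))

theorem chainA_self (hmono : Monotone t)
    (hbase : ∀ n, n < m → ∀ z ∈ V, ∀ s : I, s ∈ Icc (t n) (t (n+1)) → q (z, s) ∈ (T n).baseSet) :
    ∀ n, n ≤ m → ∀ p ∈ chainD (E := E) (F := F) q V, p.2.2.1 = p.2.2.2 →
      chainA q T t n p = p.1 := by
  intro n
  induction n with
  | zero => intro _ p hp _; rfl
  | succ n ih =>
    intro hnm p hp hab
    have hn : n ≤ m := (Nat.le_succ n).trans hnm
    simp only [chainA]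
    by_cases hc : p.2.2.1 ≤ t (n+1) ∧ t n ≤ p.2.2.2
    · rw [if_pos hc, ih hn p hp hab]
      have hcm : cmap (t (n+1)) p.2.2.1 p.2.2.2 = p.2.2.1 := by
        rw [← hab, cmap_self]
      rw [hcm]
      have hproj : TotalSpace.proj p.1 = q (p.2.1, p.2.2.1) := hp.2.1
      rw [← hproj]
      apply chartTr_self
      rw [hproj]
      refine hbase n (Nat.lt_of_succ_le hnm) p.2.1 hp.1 p.2.2.1 ⟨hab ▸ hc.2, hc.1⟩
    · rw [if_neg hc]; exact ih hn p hp hab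

theorem chainA_const (hmono : Monotone t)
    (hbase : ∀ n, n < m → ∀ z ∈ V, ∀ s : I, s ∈ Icc (t n) (t (n+1)) → q (z, s) ∈ (T n).baseSet) :
    ∀ n, n ≤ m → ∀ p ∈ chainD (E := E) (F := F) q V,
      (∀ s s' : I, q (p.2.1, s) = q (p.2.1, s')) → chainA q T t n p = p.1 := by
  intro n
  induction n with
  | zero => intro _ p hp _; rfl
  | succ n ih =>
    intro hnm p hp hconst
    have hn : n ≤ m := (Nat.le_succ n).trans hnm
    simp only [chainA]
    by_cases hc : p.2.2.1 ≤ t (n+1) ∧ t n ≤ p.2.2.2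
    · rw [if_pos hc, ih hn p hp hconst]
      have hx' : q (p.2.1, cmap (t (n+1)) p.2.2.1 p.2.2.2) = TotalSpace.proj p.1 := by
        rw [hp.2.1]; exact hconst _ _
      rw [hx']
      apply chartTr_self
      rw [hp.2.1, hconst p.2.2.1 (cmap (t n) p.2.2.1 p.2.2.2)]
      exact hbase n (Nat.lt_of_succ_le hnm) p.2.1 hp.1 _
        (cmap_mem_Icc (hmono (Nat.le_succ n)) hp.2.2 hc.1 hc.2)
    · rw [if_neg hc]; exact ih hn p hp hconst

theorem chainA_linear (ht0 : t 0 = 0) (hmono : Monotone t) (hlin : ∀ n, (T n).IsLinear ℂ)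
    (hbase : ∀ n, n < m → ∀ z ∈ V, ∀ s : I, s ∈ Icc (t n) (t (n+1)) → q (z, s) ∈ (T n).baseSet) :
    ∀ n, n ≤ m → ∀ z ∈ V, ∀ a b : I, a ≤ b →
      ∃ L : E (q (z, a)) ≃ₗ[ℂ] E (q (z, cmap (t n) a b)),
        ∀ v : E (q (z, a)),
          chainA q T t n (TotalSpace.mk (q (z, a)) v, z, a, b)
            = TotalSpace.mk (q (z, cmap (t n) a b)) (L v) := by
  intro n
  induction n with
  | zero =>
    intro _ z hz a b hab
    rw [ht0, cmap_zero hab]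
    exact ⟨LinearEquiv.refl ℂ _, fun v => rfl⟩
  | succ n ih =>
    intro hnm z hz a b hab
    have hn : n ≤ m := (Nat.le_succ n).trans hnm
    obtain ⟨L, hL⟩ := ih hn z hz a b hab
    by_cases hc : a ≤ t (n+1) ∧ t n ≤ b
    · haveI := hlin n
      have h1 : q (z, cmap (t n) a b) ∈ (T n).baseSet :=
        hbase n (Nat.lt_of_succ_le hnm) z hz _
          (cmap_mem_Icc (hmono (Nat.le_succ n)) hab hc.1 hc.2)
      have h2 : q (z, cmap (t (n+1)) a b) ∈ (T n).baseSet :=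
        hbase n (Nat.lt_of_succ_le hnm) z hz _
          (cmap_mem_Icc' (hmono (Nat.le_succ n)) hab hc.1 hc.2)
      refine ⟨L.trans (chartTrEquiv (T n) h1 h2), fun v => ?_⟩
      show chainA q T t (n+1) _ = _
      simp only [chainA]
      rw [if_pos hc, hL v, chartTr_mk (T n) h1 h2]
      rfl
    · have hcm : cmap (t n) a b = cmap (t (n+1)) a b := by
        rcases not_and_or.mp hc with h | h
        · push_neg at h
          exact cmap_eq_of_lt ((hmono (Nat.le_succ n)).trans_lt h) h
        · push_neg at h
          exact cmap_eq_of_lt' h (h.trans_le (hmono (Nat.le_succ n)))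
      rw [← hcm]
      refine ⟨L, fun v => ?_⟩
      show chainA q T t (n+1) _ = _
      simp only [chainA]
      rw [if_neg hc, hL v]

end Chain
section Chain2

variable {X B : Type*} [TopologicalSpace X] [TopologicalSpace B]
  {F : Type*} [NormedAddCommGroup F] [NormedSpace ℂ F]
  {E : X → Type*} [∀ x, AddCommGroup (E x)] [∀ x, Module ℂ (E x)]
  [∀ x, TopologicalSpace (E x)] [TopologicalSpace (TotalSpace F E)]
  [FiberBundle F E] [VectorBundle ℂ F E]

variable {q : B × I → X} {T : ℕ → Trivialization F (TotalSpace.proj : TotalSpace F E → X)}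
  {t : ℕ → I} {V : Set B} {m : ℕ}

private theorem cont_a : Continuous fun p : TotalSpace F E × B × I × I => p.2.2.1 :=
  (continuous_fst.comp continuous_snd).comp continuous_snd

private theorem cont_b : Continuous fun p : TotalSpace F E × B × I × I => p.2.2.2 :=
  (continuous_snd.comp continuous_snd).comp continuous_snd

theorem chainA_cont (hq : Continuous q) (ht0 : t 0 = 0) (hmono : Monotone t)
    (hbase : ∀ n, n < m → ∀ z ∈ V, ∀ s : I, s ∈ Icc (t n) (t (n+1)) → q (z, s) ∈ (T n).baseSet) :
    ∀ n, n ≤ m → ContinuousOn (chainA q T t n) (chainD (E := E) (F := F) q V) := by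
  intro n
  induction n with
  | zero => intro _; exact continuousOn_fst
  | succ n ih =>
    intro hnm
    have hn : n ≤ m := (Nat.le_succ n).trans hnm
    have hcn := ih hn
    have hs : t n ≤ t (n+1) := hmono (Nat.le_succ n)
    show ContinuousOn (fun p => if p.2.2.1 ≤ t (n+1) ∧ t n ≤ p.2.2.2 then
        chartTr (T n) (q (p.2.1, cmap (t (n+1)) p.2.2.1 p.2.2.2)) (chainA q T t n p)
      else chainA q T t n p) (chainD (E := E) (F := F) q V)
    have hset : {p : TotalSpace F E × B × I × I | p.2.2.1 ≤ t (n+1) ∧ t n ≤ p.2.2.2}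
        = {p : TotalSpace F E × B × I × I | p.2.2.1 ≤ t (n+1)}
          ∩ {p : TotalSpace F E × B × I × I | t n ≤ p.2.2.2} := rfl
    have hcl1 : IsClosed {p : TotalSpace F E × B × I × I | p.2.2.1 ≤ t (n+1)} :=
      isClosed_le cont_a continuous_const
    have hcl2 : IsClosed {p : TotalSpace F E × B × I × I | t n ≤ p.2.2.2} :=
      isClosed_le continuous_const cont_b
    have hclosed : IsClosed {p : TotalSpace F E × B × I × I |
        p.2.2.1 ≤ t (n+1) ∧ t n ≤ p.2.2.2} := hset ▸ hcl1.inter hcl2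
    apply ContinuousOn.if
    · -- frontier condition
      rintro p ⟨hpD, hpf⟩
      have hfr := (hset ▸ frontier_inter_subset
        {p : TotalSpace F E × B × I × I | p.2.2.1 ≤ t (n+1)}
        {p : TotalSpace F E × B × I × I | t n ≤ p.2.2.2}) hpf
      have hproj := chainA_proj ht0 hmono hbase n hn p hpD
      rcases hfr with ⟨h1, h2⟩ | ⟨h1, h2⟩
      · -- p.2.2.1 = t (n+1)
        have ha : p.2.2.1 = t (n+1) := frontier_le_subset_eq cont_a continuous_const h1
        have hb : t n ≤ p.2.2.2 := hcl2.closure_subset h2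
        have hcm : cmap (t n) p.2.2.1 p.2.2.2 = cmap (t (n+1)) p.2.2.1 p.2.2.2 :=
          cmap_eq_left_boundary hs ha
        have hmem : cmap (t n) p.2.2.1 p.2.2.2 ∈ Icc (t n) (t (n+1)) :=
          cmap_mem_Icc hs hpD.2.2 ha.le hb
        have hx : q (p.2.1, cmap (t (n+1)) p.2.2.1 p.2.2.2)
            = TotalSpace.proj (chainA q T t n p) := by rw [hproj, hcm]
        rw [hx]
        have hbs : TotalSpace.proj (chainA q T t n p) ∈ (T n).baseSet := by
          rw [hproj]
          exact hbase n (Nat.lt_of_succ_le hnm) p.2.1 hpD.1 _ hmem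
        exact chartTr_self _ _ hbs
      · -- p.2.2.2 = t n
        have hb : p.2.2.2 = t n := frontier_le_subset_eq continuous_const cont_b h2 |>.symm
        have ha : p.2.2.1 ≤ t (n+1) := hcl1.closure_subset h1
        have hcm : cmap (t n) p.2.2.1 p.2.2.2 = cmap (t (n+1)) p.2.2.1 p.2.2.2 :=
          cmap_eq_right_boundary hs hb
        have hmem : cmap (t n) p.2.2.1 p.2.2.2 ∈ Icc (t n) (t (n+1)) :=
          cmap_mem_Icc hs hpD.2.2 ha hb.ge
        have hx : q (p.2.1, cmap (t (n+1)) p.2.2.1 p.2.2.2)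
            = TotalSpace.proj (chainA q T t n p) := by rw [hproj, hcm]
        rw [hx]
        have hbs : TotalSpace.proj (chainA q T t n p) ∈ (T n).baseSet := by
          rw [hproj]
          exact hbase n (Nat.lt_of_succ_le hnm) p.2.1 hpD.1 _ hmem
        exact chartTr_self _ _ hbs
    · -- continuity of the chart branch
      rw [hclosed.closure_eq]
      have hc2 : Continuous fun p : TotalSpace F E × B × I × I =>
          q (p.2.1, cmap (t (n+1)) p.2.2.1 p.2.2.2) := by
        apply hq.comp
        exact (continuous_fst.comp continuous_snd).prodMk
          ((continuous_const.max cont_a).min cont_b)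
      refine (chartTr_continuousOn (T n)).comp
        ((hcn.mono inter_subset_left).prodMk hc2.continuousOn) ?_
      rintro p ⟨hpD, hc⟩
      constructor
      · rw [chainA_proj ht0 hmono hbase n hn p hpD]
        exact hbase n (Nat.lt_of_succ_le hnm) p.2.1 hpD.1 _
          (cmap_mem_Icc hs hpD.2.2 hc.1 hc.2)
      · exact hbase n (Nat.lt_of_succ_le hnm) p.2.1 hpD.1 _
          (cmap_mem_Icc' hs hpD.2.2 hc.1 hc.2)
    · exact hcn.mono inter_subset_left

/-- Transport data from a grid of trivializations along `q`. -/
theorem VBTransport.ofGrid (hq : Continuous q) (ht0 : t 0 = 0) (hmono : Monotone t)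
    (htm : t m = 1) (hlin : ∀ n, (T n).IsLinear ℂ)
    (hbase : ∀ n, n < m → ∀ z ∈ V, ∀ s : I, s ∈ Icc (t n) (t (n+1)) → q (z, s) ∈ (T n).baseSet) :
    Nonempty (VBTransport (E := E) (F := F) q V) := by
  have hcm : ∀ a b : I, a ≤ b → cmap (t m) a b = b := by
    intro a b _; rw [htm, cmap_one]
  refine ⟨⟨fun e z a b => chainA q T t m (e, z, a, b), ?_, ?_, ?_, ?_, ?_⟩⟩
  · intro e z a b hz hp hab
    have := chainA_proj ht0 hmono hbase m le_rfl (e, z, a, b) ⟨hz, hp, hab⟩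
    rwa [hcm a b hab] at this
  · intro e z a hz hp
    exact chainA_self hmono hbase m le_rfl (e, z, a, a) ⟨hz, hp, le_rfl⟩ rfl
  · intro z hz a b hab
    have key : ∀ (c : I), cmap (t m) a b = c →
        ∃ L : E (q (z, a)) ≃ₗ[ℂ] E (q (z, c)),
          ∀ v : E (q (z, a)),
            chainA q T t m (TotalSpace.mk (q (z, a)) v, z, a, b)
              = TotalSpace.mk (q (z, c)) (L v) := by
      rintro c rfl
      exact chainA_linear ht0 hmono hlin hbase m le_rfl z hz a b hab
    exact key b (hcm a b hab)
  · intro e z a b hz hp hab hconst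
    exact chainA_const hmono hbase m le_rfl (e, z, a, b) ⟨hz, hp, hab⟩ hconst
  · exact chainA_cont hq ht0 hmono hbase m le_rfl

end Chain2
section Local

variable {X B : Type*} [TopologicalSpace X] [TopologicalSpace B]
  {F : Type*} [NormedAddCommGroup F] [NormedSpace ℂ F]
  {E : X → Type*} [∀ x, AddCommGroup (E x)] [∀ x, Module ℂ (E x)]
  [∀ x, TopologicalSpace (E x)] [TopologicalSpace (TotalSpace F E)]
  [FiberBundle F E] [VectorBundle ℂ F E]
  {q : B × I → X}

/-- Every point of the parameter space has a neighbourhood carrying transport data. -/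
theorem exists_VBTransport_nhd (hq : Continuous q) (z₀ : B) :
    ∃ V : Set B, IsOpen V ∧ z₀ ∈ V ∧ Nonempty (VBTransport (E := E) (F := F) q V) := by
  -- for each time s, pick a product neighbourhood mapping into the chart at `q (z₀, s)`
  have key : ∀ s : I, ∃ uv : Set B × Set I, IsOpen uv.1 ∧ IsOpen uv.2 ∧ z₀ ∈ uv.1 ∧ s ∈ uv.2 ∧
      ∀ z ∈ uv.1, ∀ s' ∈ uv.2, q (z, s') ∈ (trivializationAt F E (q (z₀, s))).baseSet := by
    intro s
    have hopen : IsOpen (q ⁻¹' (trivializationAt F E (q (z₀, s))).baseSet) :=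
      (trivializationAt F E (q (z₀, s))).open_baseSet.preimage hq
    have hmem : (z₀, s) ∈ q ⁻¹' (trivializationAt F E (q (z₀, s))).baseSet :=
      FiberBundle.mem_baseSet_trivializationAt' (q (z₀, s))
    obtain ⟨u, v, hu, hv, hz, hs, huv⟩ := isOpen_prod_iff.1 hopen z₀ s hmem
    exact ⟨(u, v), hu, hv, hz, hs, fun z hz' s' hs' => huv (Set.mk_mem_prod hz' hs')⟩
  choose uv hu hv hz₀ hs hchart using key
  -- refine the unit interval
  obtain ⟨t, ht0, hmono, ⟨m, hm⟩, hsub⟩ :=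
    exists_monotone_Icc_subset_open_cover_unitInterval (c := fun s => (uv s).2)
      (fun s => hv s) (fun s _ => Set.mem_iUnion.2 ⟨s, hs s⟩)
  choose idx hidx using hsub
  classical
  refine ⟨⋂ n ∈ Finset.range m, (uv (idx n)).1, ?_, ?_, ?_⟩
  · exact isOpen_biInter_finset fun n _ => hu (idx n)
  · exact Set.mem_biInter fun n _ => hz₀ (idx n)
  · refine VBTransport.ofGrid (T := fun n => trivializationAt F E (q (z₀, idx n)))
      hq ht0 hmono (hm m le_rfl) (fun n => inferInstance) ?_
    intro n hn z hzV s hsmem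
    exact hchart (idx n) z (Set.mem_iInter₂.1 hzV n (Finset.mem_range.2 hn)) s
      (hidx n hsmem)

/-- Transport data glues over pairwise disjoint open families. -/
theorem VBTransport.iUnion_disjoint {ι : Type*} {A : ι → Set B} (hop : ∀ i, IsOpen (A i))
    (hdisj : Pairwise (Function.onFun Disjoint A))
    (sols : ∀ i, VBTransport (E := E) (F := F) q (A i)) :
    Nonempty (VBTransport (E := E) (F := F) q (⋃ i, A i)) := by
  classical
  have huniq : ∀ {z : B} {i j : ι}, z ∈ A i → z ∈ A j → i = j := by
    intro z i j hi hj
    by_contra hne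
    exact Set.disjoint_iff.1 (hdisj hne) ⟨hi, hj⟩ |>.elim
  refine ⟨⟨fun e z a b => if h : ∃ i, z ∈ A i then (sols h.choose).g e z a b else e,
      ?_, ?_, ?_, ?_, ?_⟩⟩
  · intro e z a b hz hp hab
    obtain ⟨i, hi⟩ := Set.mem_iUnion.1 hz
    have h : ∃ i, z ∈ A i := ⟨i, hi⟩
    rw [dif_pos h]
    exact (sols h.choose).proj_eq e z a b h.choose_spec hp hab
  · intro e z a hz hp
    obtain ⟨i, hi⟩ := Set.mem_iUnion.1 hz
    have h : ∃ i, z ∈ A i := ⟨i, hi⟩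
    rw [dif_pos h]
    exact (sols h.choose).self e z a h.choose_spec hp
  · intro z hz a b hab
    obtain ⟨i, hi⟩ := Set.mem_iUnion.1 hz
    have h : ∃ i, z ∈ A i := ⟨i, hi⟩
    obtain ⟨L, hL⟩ := (sols h.choose).linear z h.choose_spec a b hab
    refine ⟨L, fun v => ?_⟩
    show (if h : ∃ i, z ∈ A i then (sols h.choose).g _ z a b else _) = _
    rw [dif_pos h]
    exact hL v
  · intro e z a b hz hp hab hconst
    obtain ⟨i, hi⟩ := Set.mem_iUnion.1 hz
    have h : ∃ i, z ∈ A i := ⟨i, hi⟩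
    rw [dif_pos h]
    exact (sols h.choose).const e z a b h.choose_spec hp hab hconst
  · apply continuousOn_of_locally_continuousOn
    rintro p ⟨hz, hp, hab⟩
    obtain ⟨i, hi⟩ := Set.mem_iUnion.1 hz
    refine ⟨{p : TotalSpace F E × B × I × I | p.2.1 ∈ A i},
      (hop i).preimage ((continuous_fst.comp continuous_snd)), hi, ?_⟩
    have heq : Set.EqOn
        (fun p : TotalSpace F E × B × I × I =>
          if h : ∃ j, p.2.1 ∈ A j then (sols h.choose).g p.1 p.2.1 p.2.2.1 p.2.2.2 else p.1)
        (fun p : TotalSpace F E × B × I × I => (sols i).g p.1 p.2.1 p.2.2.1 p.2.2.2)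
        ({p | p.2.1 ∈ ⋃ j, A j ∧ TotalSpace.proj p.1 = q (p.2.1, p.2.2.1) ∧ p.2.2.1 ≤ p.2.2.2}
          ∩ {p : TotalSpace F E × B × I × I | p.2.1 ∈ A i}) := by
      rintro p ⟨_, hpi⟩
      have h : ∃ j, p.2.1 ∈ A j := ⟨i, hpi⟩
      have : h.choose = i := huniq h.choose_spec hpi
      dsimp only
      rw [dif_pos h, this]
    refine ContinuousOn.congr ?_ heq
    refine ((sols i).cont.mono ?_)
    rintro p ⟨⟨_, hp2, hp3⟩, hpi⟩
    exact ⟨hpi, hp2, hp3⟩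

end Local
section Milnor

variable {X B : Type*} [TopologicalSpace X] [TopologicalSpace B]
  {F : Type*} [NormedAddCommGroup F] [NormedSpace ℂ F]
  {E : X → Type*} [∀ x, AddCommGroup (E x)] [∀ x, Module ℂ (E x)]
  [∀ x, TopologicalSpace (E x)] [TopologicalSpace (TotalSpace F E)]
  [FiberBundle F E] [VectorBundle ℂ F E]
  {q : B × I → X}

/-- Milnor's trick: a countable cover by open sets carrying transport data. -/
theorem exists_countable_transport_cover [T2Space B] [ParacompactSpace B] (hq : Continuous q) :
    ∃ W : ℕ → Set B, (∀ k, IsOpen (W k)) ∧ (∀ z : B, ∃ k, z ∈ W k) ∧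
      ∀ k, Nonempty (VBTransport (E := E) (F := F) q (W k)) := by
  classical
  choose V hVopen hVmem hVsol using fun z : B => exists_VBTransport_nhd (E := E) (F := F) hq z
  obtain ⟨f, hf⟩ := PartitionOfUnity.exists_isSubordinate (s := (Set.univ : Set B))
    isClosed_univ V hVopen (fun z _ => Set.mem_iUnion.2 ⟨z, hVmem z⟩)
  set W : Finset B → Set B :=
    fun s => {z | ∀ α ∈ s, 0 < f α z ∧ ∀ β, β ∉ s → f β z < f α z} with hW
  -- openness
  have hWopen : ∀ s, IsOpen (W s) := by
    intro s
    rw [isOpen_iff_mem_nhds]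
    intro z hz
    obtain ⟨N, hN, hfin⟩ := f.locallyFinite z
    set Tf := hfin.toFinset with hTf
    set O : Set B := interior N ∩ ⋂ α ∈ s, ({w | 0 < f α w} ∩ ⋂ β ∈ Tf \ s, {w | f β w < f α w})
      with hO
    have hOopen : IsOpen O := by
      refine isOpen_interior.inter (isOpen_biInter_finset fun α _ => ?_)
      refine (isOpen_lt continuous_const (f α).continuous).inter
        (isOpen_biInter_finset fun β _ => ?_)
      exact isOpen_lt (f β).continuous (f α).continuous
    have hzO : z ∈ O := by
      refine ⟨mem_interior_iff_mem_nhds.2 hN, Set.mem_iInter₂.2 fun α hα => ?_⟩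
      refine ⟨(hz α hα).1, Set.mem_iInter₂.2 fun β hβ => ?_⟩
      exact (hz α hα).2 β (Finset.mem_sdiff.1 hβ).2
    have hsub : O ⊆ W s := by
      rintro w ⟨hw1, hw2⟩
      intro α hα
      have h2 := Set.mem_iInter₂.1 hw2 α hα
      refine ⟨h2.1, fun β hβ => ?_⟩
      by_cases hmem : β ∈ Tf
      · exact Set.mem_iInter₂.1 h2.2 β (Finset.mem_sdiff.2 ⟨hmem, hβ⟩)
      · have : f β w = 0 := by
          by_contra hne
          exact hmem (hTf ▸ hfin.mem_toFinset.2 ⟨w, Function.mem_support.2 hne,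
            interior_subset hw1⟩)
        rw [this]; exact h2.1
    exact Filter.mem_of_superset (hOopen.mem_nhds hzO) hsub
  -- disjointness within fixed cardinality
  have hWdisj : ∀ k : ℕ, ∀ s s' : Finset B, s.card = k → s'.card = k → s ≠ s' →
      Disjoint (W s) (W s') := by
    intro k s s' hs hs' hne
    rw [Set.disjoint_iff]
    rintro z ⟨hzs, hzs'⟩
    have h1 : ¬s ⊆ s' := fun hsub => hne (Finset.eq_of_subset_of_card_le hsub ((hs'.trans hs.symm).le))
    have h2 : ¬s' ⊆ s := fun hsub => hne (Finset.eq_of_subset_of_card_le hsub ((hs.trans hs'.symm).le) |>.symm)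
    obtain ⟨α, hαs, hαs'⟩ := Finset.not_subset.1 h1
    obtain ⟨α', hα's', hα's⟩ := Finset.not_subset.1 h2
    exact absurd ((hzs α hαs).2 α' hα's) (not_lt_of_gt ((hzs' α' hα's').2 α hαs'))
  -- subordination
  have hWsub : ∀ s : Finset B, ∀ α ∈ s, W s ⊆ V α := by
    intro s α hα z hz
    exact hf α (subset_closure (Function.mem_support.2 (ne_of_gt ((hz α hα).1))))
  -- cover
  have hWcov : ∀ z : B, ∃ s : Finset B, 0 < s.card ∧ z ∈ W s := by
    intro z
    have hfin := f.locallyFinite.point_finite z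
    set sF : Finset B := hfin.toFinset with hsF
    have hne : ∃ i, f i z ≠ 0 := by
      by_contra hall
      push_neg at hall
      have : ∑ᶠ i, f i z = 0 := finsum_eq_zero_of_forall_eq_zero hall
      rw [f.sum_eq_one (Set.mem_univ z)] at this
      exact one_ne_zero this
    obtain ⟨i₀, hi₀⟩ := hne
    have hi₀sF : i₀ ∈ sF := by
      rw [hsF, hfin.mem_toFinset]
      exact Function.mem_support.2 hi₀
    have hsFne : sF.Nonempty := ⟨i₀, hi₀sF⟩
    set M : ℝ := sF.sup' hsFne (fun i => f i z) with hM
    have hMpos : 0 < M := by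
      rcases lt_or_eq_of_le (f.nonneg i₀ z) with h | h
      · exact lt_of_lt_of_le h (Finset.le_sup' (fun i => (f i) z) hi₀sF)
      · exact absurd h.symm hi₀
    set ms : Finset B := sF.filter (fun i => f i z = M) with hms
    have hmsne : ms.Nonempty := by
      obtain ⟨j, hj, hjM⟩ := Finset.exists_mem_eq_sup' hsFne (fun i => f i z)
      exact ⟨j, Finset.mem_filter.2 ⟨hj, hjM.symm⟩⟩
    refine ⟨ms, Finset.card_pos.2 hmsne, ?_⟩
    intro α hα
    have hαM : f α z = M := (Finset.mem_filter.1 hα).2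
    refine ⟨hαM ▸ hMpos, fun β hβ => ?_⟩
    rw [hαM]
    by_cases hβs : β ∈ sF
    · rcases lt_or_eq_of_le (Finset.le_sup' (fun i => f i z) hβs) with h | h
      · exact h
      · exact absurd (Finset.mem_filter.2 ⟨hβs, h⟩) hβ
    · have : f β z = 0 := by
        by_contra hne'
        exact hβs (hsF ▸ hfin.mem_toFinset.2 (Function.mem_support.2 hne'))
      rw [this]; exact hMpos
  -- assemble the countable cover
  refine ⟨fun k => ⋃ s : {s : Finset B // s.card = k + 1}, W s.1, ?_, ?_, ?_⟩
  · exact fun k => isOpen_iUnion fun s => hWopen s.1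
  · intro z
    obtain ⟨s, hcard, hzs⟩ := hWcov z
    refine ⟨s.card - 1, Set.mem_iUnion.2 ⟨⟨s, by omega⟩, hzs⟩⟩
  · intro k
    refine VBTransport.iUnion_disjoint (fun s => hWopen s.1) ?_ ?_
    · intro s s' hne
      exact hWdisj (k + 1) s.1 s'.1 s.2 s'.2 (fun h => hne (Subtype.ext h))
    · intro s
      have hcard : 0 < s.1.card := by rw [s.2]; omega
      have hne2 : s.1.Nonempty := Finset.card_pos.1 hcard
      exact ((hVsol hne2.choose).some).restrict (hWsub s.1 hne2.choose hne2.choose_spec)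

end Milnor
section Glue

variable {X B : Type*} [TopologicalSpace X] [TopologicalSpace B]
  {F : Type*} [NormedAddCommGroup F] [NormedSpace ℂ F]
  {E : X → Type*} [∀ x, AddCommGroup (E x)] [∀ x, Module ℂ (E x)]
  [∀ x, TopologicalSpace (E x)] [TopologicalSpace (TotalSpace F E)]
  [FiberBundle F E] [VectorBundle ℂ F E]
  {q : B × I → X}

open Classical in
/-- The successive composition of local transports, clamped by a partition of unity. -/
def glueA (G : ℕ → TotalSpace F E → B → I → I → TotalSpace F E) (St : ℕ → Set B)
    (Tk : ℕ → B → I → I) : ℕ → TotalSpace F E × B × I → TotalSpace F E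
  | 0 => fun p => p.1
  | (k+1) => fun p =>
      if p.2.1 ∈ St k then
        G k (glueA G St Tk k p) p.2.1 (Tk k p.2.1 p.2.2) (Tk (k+1) p.2.1 p.2.2)
      else glueA G St Tk k p

theorem VBTransport.glue [T2Space B] [ParacompactSpace B] (hq : Continuous q) :
    ∃ Φ : TotalSpace F E × B × I → TotalSpace F E,
      (∀ p : TotalSpace F E × B × I, TotalSpace.proj p.1 = q (p.2.1, 0) →
        TotalSpace.proj (Φ p) = q (p.2.1, p.2.2)) ∧
      (∀ p : TotalSpace F E × B × I, TotalSpace.proj p.1 = q (p.2.1, 0) →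
        p.2.2 = 0 → Φ p = p.1) ∧
      (∀ p : TotalSpace F E × B × I, TotalSpace.proj p.1 = q (p.2.1, 0) →
        (∀ s s' : I, q (p.2.1, s) = q (p.2.1, s')) → Φ p = p.1) ∧
      (∀ (z : B) (τ : I) (c : X), q (z, 0) = c →
        ∃ L : E c ≃ₗ[ℂ] E (q (z, τ)),
          ∀ v : E c, Φ (TotalSpace.mk c v, z, τ) = TotalSpace.mk (q (z, τ)) (L v)) ∧
      ContinuousOn Φ {p : TotalSpace F E × B × I | TotalSpace.proj p.1 = q (p.2.1, 0)} := by
  classical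
  obtain ⟨W, hWopen, hWcov, hWsol⟩ := exists_countable_transport_cover (E := E) (F := F) hq
  set sols : ∀ k, VBTransport (E := E) (F := F) q (W k) := fun k => (hWsol k).some with hsols
  obtain ⟨f, hf⟩ := PartitionOfUnity.exists_isSubordinate (s := (Set.univ : Set B))
    isClosed_univ W hWopen (fun z _ => Set.mem_iUnion.2 (hWcov z))
  -- partial sums of the partition of unity
  set sg : ℕ → B → ℝ := fun k z => ∑ j ∈ Finset.range k, f j z with hsg
  have hsg_nonneg : ∀ k z, 0 ≤ sg k z := fun k z =>
    Finset.sum_nonneg fun j _ => f.nonneg j z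
  have hsg_le_one : ∀ k z, sg k z ≤ 1 := by
    intro k z
    have hfin := f.locallyFinite.point_finite z
    have hsub : Function.support (fun j => f j z) ⊆ ↑(hfin.toFinset ∪ Finset.range k) := by
      intro j hj
      simp only [Finset.coe_union, Set.mem_union, Finset.mem_coe, hfin.mem_toFinset]
      exact Or.inl (Function.mem_support.1 hj)
    have h1 : ∑ᶠ j, f j z = ∑ j ∈ hfin.toFinset ∪ Finset.range k, f j z :=
      finsum_eq_finset_sum_of_support_subset _ hsub
    have h2 : sg k z ≤ ∑ j ∈ hfin.toFinset ∪ Finset.range k, f j z := by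
      apply Finset.sum_le_sum_of_subset_of_nonneg Finset.subset_union_right
      exact fun j _ _ => f.nonneg j z
    calc sg k z ≤ ∑ j ∈ hfin.toFinset ∪ Finset.range k, f j z := h2
      _ = ∑ᶠ j, f j z := h1.symm
      _ = 1 := f.sum_eq_one (Set.mem_univ z)
  set sgI : ℕ → B → I := fun k z => ⟨sg k z, hsg_nonneg k z, hsg_le_one k z⟩ with hsgI
  have hsgIcont : ∀ k, Continuous (sgI k) := by
    intro k
    apply Continuous.subtype_mk
    exact continuous_finset_sum _ fun j _ => (f j).continuous
  have hsgImono : ∀ k z, sgI k z ≤ sgI (k+1) z := by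
    intro k z
    show sg k z ≤ sg (k+1) z
    simp only [hsg, Finset.sum_range_succ]
    exact le_add_of_nonneg_right (f.nonneg k z)
  have hsgI0 : ∀ z, sgI 0 z = 0 := by
    intro z; apply Subtype.ext; simp [hsgI, hsg]
  have hsgIsucc : ∀ k z, f k z = 0 → sgI (k+1) z = sgI k z := by
    intro k z h0; apply Subtype.ext
    show sg (k+1) z = sg k z
    simp [hsg, Finset.sum_range_succ, h0]
  set Tk : ℕ → B → I → I := fun k z τ => min τ (sgI k z) with hTk
  have hTk0 : ∀ z τ, Tk 0 z τ = 0 := by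
    intro z τ
    show min τ (sgI 0 z) = 0
    rw [hsgI0]
    exact min_eq_right (show (0:I) ≤ τ from τ.2.1)
  have hTkz : ∀ k z, Tk k z 0 = 0 := by
    intro k z
    exact min_eq_left (show (0:I) ≤ sgI k z from (sgI k z).2.1)
  have hTkmono : ∀ k z τ, Tk k z τ ≤ Tk (k+1) z τ :=
    fun k z τ => min_le_min le_rfl (hsgImono k z)
  have hTksucc : ∀ k z τ, f k z = 0 → Tk (k+1) z τ = Tk k z τ := by
    intro k z τ h0
    show min τ (sgI (k+1) z) = min τ (sgI k z)
    rw [hsgIsucc k z h0]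
  set St : ℕ → Set B := fun k => tsupport (f k) with hSt
  have hStW : ∀ k, St k ⊆ W k := fun k => hf k
  have hStf : ∀ k z, z ∉ St k → f k z = 0 := fun k z hz =>
    image_eq_zero_of_notMem_tsupport hz
  set G : ℕ → TotalSpace F E → B → I → I → TotalSpace F E := fun k => (sols k).g with hG
  set DD : Set (TotalSpace F E × B × I) :=
    {p : TotalSpace F E × B × I | TotalSpace.proj p.1 = q (p.2.1, 0)} with hDD
  -- invariants of the recursion
  have P1 : ∀ k, ∀ p ∈ DD, TotalSpace.proj (glueA G St Tk k p)
      = q (p.2.1, Tk k p.2.1 p.2.2) := by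
    intro k
    induction k with
    | zero => intro p hp; rw [hTk0]; exact hp
    | succ k ih =>
      intro p hp
      show TotalSpace.proj (if p.2.1 ∈ St k then
          G k (glueA G St Tk k p) p.2.1 (Tk k p.2.1 p.2.2) (Tk (k+1) p.2.1 p.2.2)
        else glueA G St Tk k p) = _
      by_cases hz : p.2.1 ∈ St k
      · rw [if_pos hz]
        exact (sols k).proj_eq _ _ _ _ (hStW k hz) (ih p hp) (hTkmono k _ _)
      · rw [if_neg hz, ih p hp, hTksucc k _ _ (hStf k _ hz)]
  have P2 : ∀ k, ∀ p ∈ DD, p.2.2 = 0 → glueA G St Tk k p = p.1 := by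
    intro k
    induction k with
    | zero => intro p hp _; rfl
    | succ k ih =>
      intro p hp h0
      show (if p.2.1 ∈ St k then
          G k (glueA G St Tk k p) p.2.1 (Tk k p.2.1 p.2.2) (Tk (k+1) p.2.1 p.2.2)
        else glueA G St Tk k p) = _
      by_cases hz : p.2.1 ∈ St k
      · rw [if_pos hz]
        have h1 : Tk k p.2.1 p.2.2 = 0 := by rw [h0]; exact hTkz k _
        have h2 : Tk (k+1) p.2.1 p.2.2 = 0 := by rw [h0]; exact hTkz (k+1) _
        rw [h1, h2]
        have hself : G k (glueA G St Tk k p) p.2.1 0 0 = glueA G St Tk k p :=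
          (sols k).self (glueA G St Tk k p) p.2.1 0 (hStW k hz) (by rw [P1 k p hp, h1])
        rw [hself]
        exact ih p hp h0
      · rw [if_neg hz]; exact ih p hp h0
  have P3 : ∀ k, ∀ p ∈ DD, (∀ s s' : I, q (p.2.1, s) = q (p.2.1, s')) →
      glueA G St Tk k p = p.1 := by
    intro k
    induction k with
    | zero => intro p hp _; rfl
    | succ k ih =>
      intro p hp hconst
      show (if p.2.1 ∈ St k then
          G k (glueA G St Tk k p) p.2.1 (Tk k p.2.1 p.2.2) (Tk (k+1) p.2.1 p.2.2)
        else glueA G St Tk k p) = _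
      by_cases hz : p.2.1 ∈ St k
      · rw [if_pos hz]
        have hcst : G k (glueA G St Tk k p) p.2.1 (Tk k p.2.1 p.2.2) (Tk (k+1) p.2.1 p.2.2)
            = glueA G St Tk k p :=
          (sols k).const (glueA G St Tk k p) p.2.1
            (Tk k p.2.1 p.2.2) (Tk (k+1) p.2.1 p.2.2) (hStW k hz) (P1 k p hp)
            (hTkmono k _ _) hconst
        rw [hcst]
        exact ih p hp hconst
      · rw [if_neg hz]; exact ih p hp hconst
  have P4 : ∀ k, ∀ (z : B) (τ : I) (c : X), q (z, 0) = c →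
      ∃ L : E c ≃ₗ[ℂ] E (q (z, Tk k z τ)), ∀ v : E c,
        glueA G St Tk k (TotalSpace.mk c v, z, τ)
          = TotalSpace.mk (q (z, Tk k z τ)) (L v) := by
    intro k
    induction k with
    | zero =>
      rintro z τ c rfl
      rw [hTk0 z τ]
      exact ⟨LinearEquiv.refl ℂ _, fun v => rfl⟩
    | succ k ih =>
      rintro z τ c rfl
      obtain ⟨L, hL⟩ := ih z τ _ rfl
      by_cases hz : z ∈ St k
      · obtain ⟨L', hL'0⟩ := (sols k).linear z (hStW k hz) (Tk k z τ) (Tk (k+1) z τ)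
          (hTkmono k z τ)
        have hL' : ∀ w, G k (TotalSpace.mk (q (z, Tk k z τ)) w) z (Tk k z τ) (Tk (k+1) z τ)
            = TotalSpace.mk (q (z, Tk (k+1) z τ)) (L' w) := hL'0
        refine ⟨L.trans L', fun v => ?_⟩
        show (if z ∈ St k then
            G k (glueA G St Tk k (TotalSpace.mk (q (z, 0)) v, z, τ)) z (Tk k z τ) (Tk (k+1) z τ)
          else glueA G St Tk k (TotalSpace.mk (q (z, 0)) v, z, τ)) = _
        rw [if_pos hz, hL v, hL' (L v)]
        rfl
      · have he : Tk (k+1) z τ = Tk k z τ := hTksucc k z τ (hStf k z hz)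
        rw [he]
        refine ⟨L, fun v => ?_⟩
        show (if z ∈ St k then
            G k (glueA G St Tk k (TotalSpace.mk (q (z, 0)) v, z, τ)) z (Tk k z τ) (Tk (k+1) z τ)
          else glueA G St Tk k (TotalSpace.mk (q (z, 0)) v, z, τ)) = _
        rw [if_neg hz]
        exact hL v
  have P5 : ∀ k, ContinuousOn (glueA G St Tk k) DD := by
    intro k
    induction k with
    | zero => exact continuousOn_fst
    | succ k ih =>
      apply continuousOn_of_locally_continuousOn
      intro p₀ hp₀
      by_cases hz₀ : p₀.2.1 ∈ St k
      · refine ⟨{p : TotalSpace F E × B × I | p.2.1 ∈ W k},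
          (hWopen k).preimage (continuous_fst.comp continuous_snd), hStW k hz₀, ?_⟩
        have heq : Set.EqOn (glueA G St Tk (k+1))
            (fun p : TotalSpace F E × B × I => G k (glueA G St Tk k p) p.2.1
              (Tk k p.2.1 p.2.2) (Tk (k+1) p.2.1 p.2.2))
            (DD ∩ {p : TotalSpace F E × B × I | p.2.1 ∈ W k}) := by
          rintro p ⟨hpD, hpW⟩
          show (if p.2.1 ∈ St k then
              G k (glueA G St Tk k p) p.2.1 (Tk k p.2.1 p.2.2) (Tk (k+1) p.2.1 p.2.2)
            else glueA G St Tk k p)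
            = G k (glueA G St Tk k p) p.2.1 (Tk k p.2.1 p.2.2) (Tk (k+1) p.2.1 p.2.2)
          by_cases hz : p.2.1 ∈ St k
          · rw [if_pos hz]
          · rw [if_neg hz]
            have he : Tk (k+1) p.2.1 p.2.2 = Tk k p.2.1 p.2.2 :=
              hTksucc k _ _ (hStf k _ hz)
            rw [he]
            exact ((sols k).self (glueA G St Tk k p) p.2.1 (Tk k p.2.1 p.2.2) hpW
              (P1 k p hpD)).symm
        refine ContinuousOn.congr ?_ heq
        have hmap : ContinuousOn (fun p : TotalSpace F E × B × I =>
            ((glueA G St Tk k p), (p.2.1, (Tk k p.2.1 p.2.2, Tk (k+1) p.2.1 p.2.2))))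
            (DD ∩ {p : TotalSpace F E × B × I | p.2.1 ∈ W k}) := by
          refine (ih.mono Set.inter_subset_left).prodMk (Continuous.continuousOn ?_)
          have hz : Continuous fun p : TotalSpace F E × B × I => p.2.1 :=
            continuous_fst.comp continuous_snd
          have hτ : Continuous fun p : TotalSpace F E × B × I => p.2.2 :=
            continuous_snd.comp continuous_snd
          exact hz.prodMk ((hτ.min ((hsgIcont k).comp hz)).prodMk
            (hτ.min ((hsgIcont (k+1)).comp hz)))
        refine ((sols k).cont.comp hmap ?_)
        rintro p ⟨hpD, hpW⟩
        exact ⟨hpW, P1 k p hpD, hTkmono k _ _⟩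
      · refine ⟨{p : TotalSpace F E × B × I | p.2.1 ∉ St k},
          (isClosed_tsupport _).isOpen_compl.preimage (continuous_fst.comp continuous_snd),
          hz₀, ContinuousOn.congr (ih.mono Set.inter_subset_left) ?_⟩
        rintro p ⟨hpD, hpn⟩
        show (if p.2.1 ∈ St k then
            G k (glueA G St Tk k p) p.2.1 (Tk k p.2.1 p.2.2) (Tk (k+1) p.2.1 p.2.2)
          else glueA G St Tk k p) = _
        rw [if_neg hpn]
  -- stabilization
  have stab : ∀ z₀ : B, ∃ N : Set B, IsOpen N ∧ z₀ ∈ N ∧ ∃ k₀ : ℕ,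
      (∀ w ∈ N, sgI k₀ w = 1) ∧ ∀ k, k₀ ≤ k → ∀ w ∈ N, w ∉ St k := by
    intro z₀
    obtain ⟨N₀, hN₀, hfin⟩ := f.locallyFinite.closure z₀
    set Kf := hfin.toFinset with hKf
    refine ⟨interior N₀, isOpen_interior, mem_interior_iff_mem_nhds.2 hN₀,
      Kf.sup id + 1, ?_, ?_⟩
    · intro w hw
      apply Subtype.ext
      show sg (Kf.sup id + 1) w = 1
      have hsub : Function.support (fun j => f j w)
          ⊆ ↑(Finset.range (Kf.sup id + 1)) := by
        intro j hj
        have hwj : w ∈ tsupport (f j) := subset_closure (Function.mem_support.1 hj)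
        have hjK : j ∈ Kf := by
          rw [hKf, hfin.mem_toFinset]
          exact ⟨w, hwj, interior_subset hw⟩
        have : j ≤ Kf.sup id := Finset.le_sup (f := id) hjK
        simp only [Finset.coe_range, Set.mem_Iio]
        omega
      show (∑ j ∈ Finset.range (Kf.sup id + 1), f j w) = 1
      rw [← finsum_eq_finset_sum_of_support_subset _ hsub]
      exact f.sum_eq_one (Set.mem_univ w)
    · intro k hk w hw hmem
      have hkK : k ∈ Kf := by
        rw [hKf, hfin.mem_toFinset]
        exact ⟨w, hmem, interior_subset hw⟩
      have : k ≤ Kf.sup id := Finset.le_sup (f := id) hkK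
      omega
  choose N hNopen hNmem K hK1 hK2 using stab
  have hstabΦ : ∀ (z₀ : B) (k : ℕ), K z₀ ≤ k → ∀ p : TotalSpace F E × B × I,
      p.2.1 ∈ N z₀ → glueA G St Tk k p = glueA G St Tk (K z₀) p := by
    intro z₀ k hk
    induction k, hk using Nat.le_induction with
    | base => intro p _; rfl
    | succ k hk ih =>
      intro p hp
      show (if p.2.1 ∈ St k then
          G k (glueA G St Tk k p) p.2.1 (Tk k p.2.1 p.2.2) (Tk (k+1) p.2.1 p.2.2)
        else glueA G St Tk k p) = _
      rw [if_neg (hK2 z₀ k hk p.2.1 hp)]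
      exact ih p hp
  have hTKone : ∀ (z : B) (τ : I), Tk (K z) z τ = τ := by
    intro z τ
    show min τ (sgI (K z) z) = τ
    rw [hK1 z z (hNmem z)]
    exact min_eq_left (show τ ≤ (1:I) from τ.2.2)
  -- the glued map
  refine ⟨fun p => glueA G St Tk (K p.2.1) p, ?_, ?_, ?_, ?_, ?_⟩
  · intro p hp
    rw [P1 (K p.2.1) p hp, hTKone]
  · intro p hp h0
    exact P2 (K p.2.1) p hp h0
  · intro p hp hconst
    exact P3 (K p.2.1) p hp hconst
  · intro z τ c hc
    have key : ∀ d : I, Tk (K z) z τ = d →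
        ∃ L : E c ≃ₗ[ℂ] E (q (z, d)), ∀ v : E c,
          glueA G St Tk (K z) (TotalSpace.mk c v, z, τ) = TotalSpace.mk (q (z, d)) (L v) := by
      rintro d rfl
      exact P4 (K z) z τ c hc
    exact key τ (hTKone z τ)
  · apply continuousOn_of_locally_continuousOn
    intro p₀ hp₀
    refine ⟨{p : TotalSpace F E × B × I | p.2.1 ∈ N p₀.2.1},
      (hNopen p₀.2.1).preimage (continuous_fst.comp continuous_snd), hNmem p₀.2.1, ?_⟩
    have heq : Set.EqOn (fun p : TotalSpace F E × B × I => glueA G St Tk (K p.2.1) p)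
        (glueA G St Tk (K p₀.2.1))
        (DD ∩ {p : TotalSpace F E × B × I | p.2.1 ∈ N p₀.2.1}) := by
      rintro p ⟨hpD, hpN⟩
      have h1 : glueA G St Tk (max (K p.2.1) (K p₀.2.1)) p = glueA G St Tk (K p.2.1) p :=
        hstabΦ p.2.1 _ (le_max_left _ _) p (hNmem p.2.1)
      have h2 : glueA G St Tk (max (K p.2.1) (K p₀.2.1)) p = glueA G St Tk (K p₀.2.1) p :=
        hstabΦ p₀.2.1 _ (le_max_right _ _) p hpN
      show glueA G St Tk (K p.2.1) p = _
      rw [← h1, h2]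
    exact ContinuousOn.congr ((P5 (K p₀.2.1)).mono Set.inter_subset_left) heq

end Glue
/-- A strong deformation retraction of `Z` onto the subset `S`. -/
def IsStrongDeformationRetraction {Z : Type*} [TopologicalSpace Z] (S : Set Z)
    (H : Z × unitInterval → Z) : Prop :=
  Continuous H ∧ (∀ z, H (z, 0) = z) ∧ (∀ z, H (z, 1) ∈ S) ∧
    ∀ z ∈ S, ∀ t, H (z, t) = z

/-- A strong deformation retraction of a paracompact open neighbourhood `U` of a closed set `S`
in the base of a topological ℂ-vector bundle of finite rank lifts to a strong deformation
retraction of the part of the total space over `U` onto the part over `S`, covering the given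
retraction and acting as a ℂ-linear isomorphism on each fibre at time 1. -/
theorem vector_bundle_lift_strong_deformation_retraction
    {X : Type*} [TopologicalSpace X] [ParacompactSpace X] [T2Space X]
    {F : Type*} [NormedAddCommGroup F] [NormedSpace ℂ F] [FiniteDimensional ℂ F]
    (E : X → Type*) [∀ x, AddCommGroup (E x)] [∀ x, Module ℂ (E x)]
    [∀ x, TopologicalSpace (E x)] [TopologicalSpace (TotalSpace F E)]
    [FiberBundle F E] [VectorBundle ℂ F E]
    (S : Set X) (hS : IsClosed S)
    (U : Set X) (hU : IsOpen U) (hSU : S ⊆ U) (hUpara : ParacompactSpace U)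
    (r : U × unitInterval → U)
    (hr : IsStrongDeformationRetraction {z : U | (z : X) ∈ S} r) :
    ∃ ρ : (TotalSpace.proj ⁻¹' U : Set (TotalSpace F E)) × unitInterval →
        (TotalSpace.proj ⁻¹' U : Set (TotalSpace F E)),
      IsStrongDeformationRetraction
        {e : (TotalSpace.proj ⁻¹' U : Set (TotalSpace F E)) |
          (e : TotalSpace F E).proj ∈ S} ρ ∧
      (∀ (e : (TotalSpace.proj ⁻¹' U : Set (TotalSpace F E))) (t : unitInterval),
        (ρ (e, t) : TotalSpace F E).proj = (r (⟨(e : TotalSpace F E).proj, e.2⟩, t) : X)) ∧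
      ∀ x : U, ∃ g : E (x : X) ≃ₗ[ℂ] E ((r (x, 1) : U) : X),
        ∀ v : E (x : X),
          (ρ (⟨TotalSpace.mk (x : X) v, x.2⟩, 1) : TotalSpace F E) =
            TotalSpace.mk ((r (x, 1) : U) : X) (g v) := by
  classical
  haveI : ParacompactSpace ↥U := hUpara
  obtain ⟨hrc, hr0, hr1, hrS⟩ := hr
  set q : ↥U × I → X := fun p => ((r p : U) : X) with hqdef
  have hq : Continuous q := continuous_subtype_val.comp hrc
  have hq0 : ∀ z : ↥U, q (z, 0) = (z : X) := by
    intro z; rw [hqdef]; simp only [hr0 z]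
  obtain ⟨Φ, hproj, hzero, hconst, hlin, hcont⟩ := VBTransport.glue (E := E) (F := F) hq
  have hDD : ∀ (e : (TotalSpace.proj ⁻¹' U : Set (TotalSpace F E))),
      TotalSpace.proj (e : TotalSpace F E)
        = q (⟨(e : TotalSpace F E).proj, e.2⟩, 0) := by
    intro e
    rw [hq0]
  refine ⟨fun p => ⟨Φ ((p.1 : TotalSpace F E), ⟨(p.1 : TotalSpace F E).proj, p.1.2⟩, p.2), ?_⟩,
    ⟨?_, ?_, ?_, ?_⟩, ?_, ?_⟩
  · -- lands in π⁻¹ U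
    show TotalSpace.proj (Φ _) ∈ U
    rw [hproj _ (hDD p.1)]
    exact (r (⟨(p.1 : TotalSpace F E).proj, p.1.2⟩, p.2)).2
  · -- continuity
    apply Continuous.subtype_mk
    have hm : Continuous (fun p : (TotalSpace.proj ⁻¹' U : Set (TotalSpace F E)) × I =>
        ((p.1 : TotalSpace F E), (⟨(p.1 : TotalSpace F E).proj, p.1.2⟩ : ↥U), p.2)) := by
      refine (continuous_subtype_val.comp continuous_fst).prodMk (Continuous.prodMk ?_ ?_)
      · exact Continuous.subtype_mk
          ((FiberBundle.continuous_proj F E).comp (continuous_subtype_val.comp continuous_fst)) _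
      · exact continuous_snd
    exact hcont.comp_continuous hm (fun p => hDD p.1)
  · -- time 0
    intro e
    apply Subtype.ext
    exact hzero _ (hDD e) rfl
  · -- time 1 lands over S
    intro e
    show TotalSpace.proj (Φ _) ∈ S
    rw [hproj _ (hDD e)]
    exact hr1 ⟨(e : TotalSpace F E).proj, e.2⟩
  · -- fixes the fibres over S
    intro e he t
    apply Subtype.ext
    refine hconst _ (hDD e) ?_
    intro s s'
    rw [hqdef]
    simp only [hrS ⟨(e : TotalSpace F E).proj, e.2⟩ he s,
      hrS ⟨(e : TotalSpace F E).proj, e.2⟩ he s']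
  · -- covers r
    intro e t
    exact hproj _ (hDD e)
  · -- linear isomorphism on fibres at time 1
    intro x
    obtain ⟨L, hL⟩ := hlin x 1 (x : X) (hq0 x)
    exact ⟨L, fun v => hL v⟩
end
end
end

section
/- Let X = {0} ∪ {1/(πn) : n ∈ ℤ, n ≠ 0}, regarded as a subspace of ℝ. Then X admits no neighbourhood of which it is a deformation retract: there is no open set U ⊆ ℝ with X ⊆ U together with a continuous map H : U × [0,1] → U satisfying H(u,0) = u and H(u,1) ∈ X for all u ∈ U, and H(x,t) = x for all x ∈ X and t ∈ [0,1]. -/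
open unitInterval

/-- The set `X = {0} ∪ {1/(πn) : n ∈ ℤ, n ≠ 0} ⊆ ℝ` admits no neighbourhood of which it is a
(strong) deformation retract. -/
theorem no_neighbourhood_deformation_retract
    (X : Set ℝ)
    (hX : X = {0} ∪ {u : ℝ | ∃ n : ℤ, n ≠ 0 ∧ u = 1 / (Real.pi * n)}) :
    ¬ ∃ (U : Set ℝ) (H : U × unitInterval → U),
        IsOpen U ∧ X ⊆ U ∧ Continuous H ∧
        (∀ u : U, H (u, 0) = u) ∧
        (∀ u : U, (H (u, 1) : ℝ) ∈ X) ∧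
        (∀ u : U, (u : ℝ) ∈ X → ∀ t : unitInterval, H (u, t) = u) := by
  classical
  rintro ⟨U, H, hUopen, hXU, hHcont, -, h1, hfix⟩
  have pi_pos := Real.pi_pos
  have h0X : (0 : ℝ) ∈ X := by rw [hX]; exact Or.inl rfl
  have h0U : (0 : ℝ) ∈ U := hXU h0X
  obtain ⟨ε, hε, hball⟩ := Metric.isOpen_iff.mp hUopen 0 h0U
  obtain ⟨n, hn⟩ := exists_nat_gt (1 / (Real.pi * ε))
  have hn0 : 0 < (n : ℝ) := lt_of_le_of_lt (by positivity) hn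
  set b : ℝ := 1 / (Real.pi * n) with hb
  have hbpos : 0 < b := by positivity
  have hbε : b < ε := by
    rw [hb, div_lt_iff₀ (by positivity)]
    rw [div_lt_iff₀ (by positivity)] at hn
    nlinarith
  have hIccU : Set.Icc (0 : ℝ) b ⊆ U := by
    intro x hx
    apply hball
    simp only [Metric.mem_ball, Real.dist_eq, sub_zero]
    rw [abs_of_nonneg hx.1]
    exact lt_of_le_of_lt hx.2 hbε
  have hbX : b ∈ X := by
    rw [hX]
    refine Or.inr ⟨(n : ℤ), ?_, by push_cast [hb]; ring_nf⟩
    exact_mod_cast hn0.ne'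
  -- the retraction at time 1
  set g : ℝ → ℝ := fun x => if h : x ∈ U then (H (⟨x, h⟩, 1) : ℝ) else 0 with hg
  have hgcont : ContinuousOn g U := by
    rw [continuousOn_iff_continuous_restrict]
    have : U.restrict g = fun u : U => (H (u, 1) : ℝ) := by
      funext u; simp [hg, Set.restrict, u.2]
    rw [show U.domRestrict g = U.restrict g from rfl, this]
    exact continuous_subtype_val.comp (hHcont.comp (Continuous.prodMk_left 1))
  have hgX : ∀ x (hx : x ∈ U), g x ∈ X := by
    intro x hx; simp only [hg, dif_pos hx]; exact h1 ⟨x, hx⟩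
  have hgfix : ∀ x (hx : x ∈ U), x ∈ X → g x = x := by
    intro x hx hxX
    simp only [hg, dif_pos hx]
    exact congrArg Subtype.val (hfix ⟨x, hx⟩ hxX 1)
  have hg0 : g 0 = 0 := hgfix 0 h0U h0X
  have hgb : g b = b := hgfix b (hIccU ⟨le_of_lt hbpos, le_refl b⟩) hbX
  -- the middle point not in X
  set c : ℝ := 2 / (Real.pi * (2 * n + 1)) with hc
  have hcpos : 0 < c := by positivity
  have hcb : c < b := by
    rw [hc, hb, div_lt_div_iff₀ (by positivity) (by positivity)]
    nlinarith
  have hcX : c ∉ X := by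
    rw [hX]
    rintro (h | ⟨m, hm0, hm⟩)
    · exact hcpos.ne' h
    · have hm0' : (m : ℝ) ≠ 0 := Int.cast_ne_zero.mpr hm0
      rw [hc] at hm
      have : (2 : ℝ) * m = 2 * n + 1 := by
        field_simp at hm
        have := mul_left_cancel₀ Real.pi_ne_zero (by rw [hm] : Real.pi * (2 * m) = Real.pi * (2 * n + 1))
        linarith
      have : (2 : ℤ) * m = 2 * n + 1 := by exact_mod_cast this
      omega
  -- IVT contradiction
  have hiv := intermediate_value_Icc (le_of_lt hbpos) (hgcont.mono hIccU)
  rw [hg0, hgb] at hiv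
  obtain ⟨x, hxIcc, hgx⟩ := hiv ⟨le_of_lt hcpos, le_of_lt hcb⟩
  exact hcX (hgx ▸ hgX x (hIccU hxIcc))
end

section
/- Define f : ℝ → ℝ by f(m) = exp(−1/m²) for m ≠ 0 and f(0) = 0, and define d : ℝ × ℝ² → ℝ by d(m,(x,y)) = f(m)·(x cos(1/m) + y sin(1/m)) for m ≠ 0 and d(0,(x,y)) = 0. Then: (1) d is infinitely differentiable (C^∞) on ℝ × ℝ²; (2) the kernel of the linear map (x,y) ↦ d(m,(x,y)) is all of ℝ² when m = 0, and is the one-dimensional subspace span{(sin(1/m), −cos(1/m))} when m ≠ 0; (3) the map g : ℝ \ {0} → ℙ(ℝ²) given by g(m) = span{(sin(1/m), −cos(1/m))} admits no continuous extension to ℝ, i.e. there is no continuous map G : ℝ → ℙ(ℝ²) with G(m) = g(m) for all m ≠ 0. -/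
open Projectivization in
instance {K V : Type*} [DivisionRing K] [AddCommGroup V] [Module K V] [TopologicalSpace V] :
    TopologicalSpace (Projectivization K V) :=
  inferInstanceAs (TopologicalSpace (Quotient (projectivizationSetoid K V)))

open Polynomial Filter Topology Complex


noncomputable def Waux (x : ℝ) : ℂ := ((-(x⁻¹ ^ 2) : ℝ) : ℂ) + ((x⁻¹ : ℝ) : ℂ) * Complex.I

noncomputable def gaux (p : ℂ[X]) (x : ℝ) : ℂ :=
  if x = 0 then 0 else p.eval ((x⁻¹ : ℝ) : ℂ) * Complex.exp (Waux x)

noncomputable def Daux (p : ℂ[X]) : ℂ[X] :=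
  (2 * X ^ 3 - C Complex.I * X ^ 2) * p - X ^ 2 * derivative p

lemma lim_inv_sq : Tendsto (fun x : ℝ => x⁻¹ ^ 2) (𝓝[≠] (0:ℝ)) atTop := by
  have h1 : Tendsto (fun x : ℝ => x ^ 2) (𝓝[≠] (0:ℝ)) (𝓝[>] (0:ℝ)) := by
    rw [tendsto_nhdsWithin_iff]
    constructor
    · have h := ((continuous_pow 2).tendsto (0:ℝ)).mono_left
        (nhdsWithin_le_nhds (s := {(0:ℝ)}ᶜ))
      simpa using h
    · filter_upwards [self_mem_nhdsWithin] with x hx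
      exact pow_pos (abs_pos.mpr hx) 2 |>.trans_eq (by rw [_root_.sq_abs])
  have := tendsto_inv_nhdsGT_zero.comp h1
  simpa [Function.comp_def, inv_pow] using this

lemma outer_lim (c : ℝ) (n : ℕ) :
    Tendsto (fun t : ℝ => c * ((t + 1) ^ n * Real.exp (-t))) atTop (𝓝 0) := by
  have h1 : Tendsto (fun t : ℝ => (t + 1) ^ n * Real.exp (-(t + 1))) atTop (𝓝 0) :=
    (Real.tendsto_pow_mul_exp_neg_atTop_nhds_zero n).comp (tendsto_atTop_add_const_right _ 1 tendsto_id)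
  have h2 : Tendsto (fun t : ℝ => c * Real.exp 1 * ((t + 1) ^ n * Real.exp (-(t + 1))))
      atTop (𝓝 0) := by simpa using h1.const_mul (c * Real.exp 1)
  refine h2.congr fun t => ?_
  rw [show -t = -(t+1) + 1 by ring, Real.exp_add]
  ring

lemma lim_p (p : ℂ[X]) :
    Tendsto (fun x : ℝ => p.eval ((x⁻¹ : ℝ) : ℂ) * Complex.exp (Waux x)) (𝓝[≠] (0:ℝ)) (𝓝 0) := by
  induction p using Polynomial.induction_on' with
  | add p q hp hq =>
    have := hp.add hq
    simpa [add_mul] using this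
  | monomial n a =>
    simp only [eval_monomial]
    have habs : ∀ x : ℝ, ‖a * ((x⁻¹ : ℝ) : ℂ) ^ n * Complex.exp (Waux x)‖
        ≤ ‖a‖ * ((x⁻¹ ^ 2 + 1) ^ n * Real.exp (-(x⁻¹ ^ 2))) := by
      intro x
      have hre : (Waux x).re = -(x⁻¹ ^ 2) := by
        simp only [Waux, Complex.add_re, Complex.ofReal_re, Complex.mul_re, Complex.I_re,
          Complex.I_im, Complex.ofReal_im]
        ring
      simp only [norm_mul, Complex.norm_exp, hre, norm_pow,
        Complex.norm_real, Real.norm_eq_abs]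
      have hb : |x⁻¹| ^ n ≤ (x⁻¹ ^ 2 + 1) ^ n := by
        apply pow_le_pow_left₀ (abs_nonneg _)
        nlinarith [sq_nonneg (|x⁻¹| - 1), _root_.sq_abs x⁻¹]
      have := mul_le_mul_of_nonneg_right (mul_le_mul_of_nonneg_left hb (norm_nonneg a))
        (Real.exp_nonneg (-(x⁻¹ ^ 2)))
      linarith [this]
    apply squeeze_zero_norm habs
    have := (outer_lim ‖a‖ n).comp lim_inv_sq
    simpa [Function.comp_def] using this


lemma gaux_zero (p : ℂ[X]) : gaux p 0 = 0 := by simp [gaux]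

lemma hasDeriv_ne (p : ℂ[X]) {x : ℝ} (hx : x ≠ 0) :
    HasDerivAt (gaux p) (gaux (Daux p) x) x := by
  have hinv : HasDerivAt (fun y : ℝ => y⁻¹) (-(x ^ 2)⁻¹) x := hasDerivAt_inv hx
  have hc : HasDerivAt (fun y : ℝ => ((y⁻¹ : ℝ) : ℂ)) ((-(x ^ 2)⁻¹ : ℝ) : ℂ) x :=
    hinv.ofReal_comp
  have hP : HasDerivAt (fun y : ℝ => p.eval ((y⁻¹ : ℝ) : ℂ))
      (((-(x ^ 2)⁻¹ : ℝ) : ℂ) • p.derivative.eval ((x⁻¹ : ℝ) : ℂ)) x :=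
    by have := (p.hasDerivAt ((x⁻¹ : ℝ) : ℂ)).scomp x hc; exact this
  have hW : HasDerivAt Waux
      (((-(2 * x⁻¹ ^ 1 * -(x ^ 2)⁻¹) : ℝ) : ℂ) + ((-(x ^ 2)⁻¹ : ℝ) : ℂ) * Complex.I) x := by
    have h1 : HasDerivAt (fun y : ℝ => -(y⁻¹ ^ 2)) (-(2 * x⁻¹ ^ 1 * -(x ^ 2)⁻¹)) x := by
      refine ((hinv.pow 2).neg).congr_deriv ?_; norm_num
    exact (h1.ofReal_comp).add ((hinv.ofReal_comp).mul_const Complex.I)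
  have hE : HasDerivAt (fun y : ℝ => Complex.exp (Waux y))
      (Complex.exp (Waux x) * (((-(2 * x⁻¹ ^ 1 * -(x ^ 2)⁻¹) : ℝ) : ℂ)
        + ((-(x ^ 2)⁻¹ : ℝ) : ℂ) * Complex.I)) x := hW.cexp
  have htot := hP.mul hE
  have heq : (fun y : ℝ => p.eval ((y⁻¹ : ℝ) : ℂ) * Complex.exp (Waux y)) =ᶠ[𝓝 x] gaux p := by
    filter_upwards [isOpen_compl_singleton.mem_nhds (by simpa using hx :
      x ∈ ({(0:ℝ)}ᶜ : Set ℝ))] with y hy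
    simp [gaux, (by simpa using hy : y ≠ 0)]
  refine (htot.congr_of_eventuallyEq heq.symm).congr_deriv ?_
  have hx2 : ((x : ℂ)) ≠ 0 := by exact_mod_cast hx
  simp only [gaux, if_neg hx, Daux, eval_sub, eval_mul, eval_add, eval_pow, eval_ofNat,
    eval_C, eval_X]
  push_cast
  simp only [← inv_pow, smul_eq_mul]
  ring

lemma gaux_eventually_eq (p : ℂ[X]) :
    gaux p =ᶠ[𝓝[≠] (0:ℝ)] fun x => p.eval ((x⁻¹ : ℝ) : ℂ) * Complex.exp (Waux x) := by
  filter_upwards [self_mem_nhdsWithin] with x hx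
  simp [gaux, (by simpa using hx : x ≠ 0)]

lemma gaux_cont0 (p : ℂ[X]) : ContinuousAt (gaux p) 0 := by
  unfold ContinuousAt
  rw [gaux_zero, ← nhdsNE_sup_pure (0:ℝ), tendsto_sup]
  refine ⟨(lim_p p).congr' (gaux_eventually_eq p).symm, ?_⟩
  rw [tendsto_pure_left]
  intro s hs
  simpa [gaux_zero] using mem_of_mem_nhds hs

lemma hasDeriv_zero (p : ℂ[X]) : HasDerivAt (gaux p) 0 0 := by
  rw [hasDerivAt_iff_tendsto_slope]
  have heq : slope (gaux p) 0 =ᶠ[𝓝[≠] (0:ℝ)]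
      fun x => (X * p).eval ((x⁻¹ : ℝ) : ℂ) * Complex.exp (Waux x) := by
    filter_upwards [self_mem_nhdsWithin] with x hx
    have hx' : x ≠ 0 := by simpa using hx
    simp [slope, gaux, hx', Complex.real_smul]
    ring
  exact (lim_p (X * p)).congr' heq.symm

lemma gaux_diff (p : ℂ[X]) : Differentiable ℝ (gaux p) := by
  intro x
  rcases eq_or_ne x 0 with rfl | hx
  · exact (hasDeriv_zero p).differentiableAt
  · exact (hasDeriv_ne p hx).differentiableAt

lemma gaux_deriv_eq (p : ℂ[X]) : deriv (gaux p) = gaux (Daux p) := by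
  funext x
  rcases eq_or_ne x 0 with rfl | hx
  · rw [(hasDeriv_zero p).deriv, gaux_zero]
  · exact (hasDeriv_ne p hx).deriv

lemma gaux_contDiff_nat : ∀ (n : ℕ) (p : ℂ[X]), ContDiff ℝ (n : WithTop ℕ∞) (gaux p) := by
  intro n
  induction n with
  | zero =>
    intro p
    rw [show ((0:ℕ) : WithTop ℕ∞) = 0 from rfl, contDiff_zero]
    rw [continuous_iff_continuousAt]
    intro x
    rcases eq_or_ne x 0 with rfl | hx
    · exact gaux_cont0 p
    · exact (hasDeriv_ne p hx).continuousAt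
  | succ n ih =>
    intro p
    rw [show ((n+1:ℕ) : WithTop ℕ∞) = (n : WithTop ℕ∞) + 1 by push_cast; ring]
    rw [contDiff_succ_iff_deriv]
    refine ⟨gaux_diff p, ?_, ?_⟩
    · intro h
      exact absurd h (by simp)
    · rw [gaux_deriv_eq]
      exact ih (Daux p)

lemma gaux_contDiff (p : ℂ[X]) : ContDiff ℝ (((⊤:ℕ∞)) : WithTop ℕ∞) (gaux p) :=
  contDiff_infty.2 fun n => gaux_contDiff_nat n p

open Projectivization in
lemma isQuotientMap_pmk :
    IsQuotientMap (fun v : {w : ℝ × ℝ // w ≠ 0} => Projectivization.mk ℝ v.1 v.2) :=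
  isQuotientMap_quot_mk

lemma mem_span_iff_1 {v : ℝ × ℝ} (hv : v ≠ 0) :
    ((1, 0) : ℝ × ℝ) ∈ Submodule.span ℝ {v} ↔ v.2 = 0 := by
  rw [Submodule.mem_span_singleton]
  constructor
  · rintro ⟨a, ha⟩
    rw [Prod.ext_iff] at ha
    simp only [Prod.smul_fst, Prod.smul_snd, smul_eq_mul] at ha
    rcases eq_or_ne a 0 with rfl | ha0
    · simp at ha
    · rcases mul_eq_zero.mp ha.2 with h | h
      · exact absurd h ha0
      · exact h
  · intro h2
    have hv1 : v.1 ≠ 0 := by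
      intro h1
      exact hv (Prod.ext h1 h2)
    exact ⟨v.1⁻¹, by simp [Prod.ext_iff, Prod.smul_fst, Prod.smul_snd, smul_eq_mul, h2,
      inv_mul_cancel₀ hv1]⟩

lemma mem_span_iff_2 {v : ℝ × ℝ} (hv : v ≠ 0) :
    ((0, 1) : ℝ × ℝ) ∈ Submodule.span ℝ {v} ↔ v.1 = 0 := by
  rw [Submodule.mem_span_singleton]
  constructor
  · rintro ⟨a, ha⟩
    rw [Prod.ext_iff] at ha
    simp only [Prod.smul_fst, Prod.smul_snd, smul_eq_mul] at ha
    rcases eq_or_ne a 0 with rfl | ha0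
    · simp at ha
    · rcases mul_eq_zero.mp ha.1 with h | h
      · exact absurd h ha0
      · exact h
  · intro h1
    have hv2 : v.2 ≠ 0 := by
      intro h2
      exact hv (Prod.ext h1 h2)
    exact ⟨v.2⁻¹, by simp [Prod.ext_iff, Prod.smul_fst, Prod.smul_snd, smul_eq_mul, h1,
      inv_mul_cancel₀ hv2]⟩

open Projectivization in
lemma isOpen_U1 : IsOpen {P : Projectivization ℝ (ℝ × ℝ) | ((1, 0) : ℝ × ℝ) ∉ P.submodule} := by
  rw [← isQuotientMap_pmk.isOpen_preimage]
  have : (fun v : {w : ℝ × ℝ // w ≠ 0} => Projectivization.mk ℝ v.1 v.2) ⁻¹'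
      {P : Projectivization ℝ (ℝ × ℝ) | ((1, 0) : ℝ × ℝ) ∉ P.submodule}
      = Subtype.val ⁻¹' {w : ℝ × ℝ | w.2 ≠ 0} := by
    ext v
    simp only [Set.mem_preimage, Set.mem_setOf_eq, submodule_mk]
    rw [show (ℝ ∙ v.1) = Submodule.span ℝ {v.1} from rfl]
    rw [not_iff_not.mpr (mem_span_iff_1 v.2)]
  rw [this]
  exact (isOpen_compl_singleton.preimage continuous_snd).preimage continuous_subtype_val

open Projectivization in
lemma isOpen_U2 : IsOpen {P : Projectivization ℝ (ℝ × ℝ) | ((0, 1) : ℝ × ℝ) ∉ P.submodule} := by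
  rw [← isQuotientMap_pmk.isOpen_preimage]
  have : (fun v : {w : ℝ × ℝ // w ≠ 0} => Projectivization.mk ℝ v.1 v.2) ⁻¹'
      {P : Projectivization ℝ (ℝ × ℝ) | ((0, 1) : ℝ × ℝ) ∉ P.submodule}
      = Subtype.val ⁻¹' {w : ℝ × ℝ | w.1 ≠ 0} := by
    ext v
    simp only [Set.mem_preimage, Set.mem_setOf_eq, submodule_mk]
    rw [show (ℝ ∙ v.1) = Submodule.span ℝ {v.1} from rfl]
    rw [not_iff_not.mpr (mem_span_iff_2 v.2)]
  rw [this]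
  exact (isOpen_compl_singleton.preimage continuous_fst).preimage continuous_subtype_val


/-- The smooth bundle morphism `d(m,(x,y)) = e^{-1/m²}(x cos(1/m) + y sin(1/m))` is `C^∞`;
its fibrewise kernel is all of `ℝ²` at `m = 0` and the line spanned by
`(sin(1/m), -cos(1/m))` for `m ≠ 0`; and the resulting line field on `ℝ \ {0}` admits no
continuous extension to `ℝ` as a map to the real projective line. -/
theorem smooth_kernel_line_field_no_continuous_extension
    (f : ℝ → ℝ) (hf0 : f 0 = 0)
    (hf : ∀ m : ℝ, m ≠ 0 → f m = Real.exp (-(1 / m ^ 2)))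
    (d : ℝ × (ℝ × ℝ) → ℝ)
    (hd0 : ∀ v : ℝ × ℝ, d (0, v) = 0)
    (hd : ∀ m : ℝ, m ≠ 0 → ∀ v : ℝ × ℝ,
      d (m, v) = f m * (v.1 * Real.cos (1 / m) + v.2 * Real.sin (1 / m))) :
    ContDiff ℝ ((⊤ : ℕ∞) : WithTop ℕ∞) d ∧
    {v : ℝ × ℝ | d (0, v) = 0} = Set.univ ∧
    (∀ m : ℝ, m ≠ 0 →
      {v : ℝ × ℝ | d (m, v) = 0} =
        ↑(Submodule.span ℝ {((Real.sin (1 / m), -Real.cos (1 / m)) : ℝ × ℝ)}) ∧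
      Module.finrank ℝ
        (Submodule.span ℝ {((Real.sin (1 / m), -Real.cos (1 / m)) : ℝ × ℝ)}) = 1) ∧
    ¬ ∃ G : ℝ → Projectivization ℝ (ℝ × ℝ), Continuous G ∧
        ∀ m : ℝ, m ≠ 0 →
          (G m).submodule =
            Submodule.span ℝ {((Real.sin (1 / m), -Real.cos (1 / m)) : ℝ × ℝ)} := by
  have hgd : d = fun q : ℝ × (ℝ × ℝ) => q.2.1 * (gaux 1 q.1).re + q.2.2 * (gaux 1 q.1).im := by
    funext q
    obtain ⟨m, v⟩ := q
    rcases eq_or_ne m 0 with rfl | hm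
    · simp [hd0, gaux_zero]
    · rw [hd m hm v]
      show _ = v.1 * (gaux 1 m).re + v.2 * (gaux 1 m).im
      rw [gaux, if_neg hm]
      simp only [eval_one, one_mul]
      have hre : (Waux m).re = -(m⁻¹ ^ 2) := by
        simp only [Waux, Complex.add_re, Complex.ofReal_re, Complex.mul_re, Complex.I_re,
          Complex.I_im, Complex.ofReal_im]
        ring
      have him : (Waux m).im = m⁻¹ := by
        simp only [Waux, Complex.add_im, Complex.ofReal_im, Complex.mul_im, Complex.I_re,
          Complex.I_im, Complex.ofReal_re]
        ring
      rw [Complex.exp_re, Complex.exp_im, hre, him, hf m hm,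
        show -(1 / m ^ 2) = -(m⁻¹ ^ 2) by rw [one_div, inv_pow], one_div]
      ring
  refine ⟨?_, ?_, ?_, ?_⟩
  · rw [hgd]
    have hg := gaux_contDiff 1
    have h1 : ContDiff ℝ ((⊤ : ℕ∞) : WithTop ℕ∞) (fun q : ℝ × (ℝ × ℝ) => gaux 1 q.1) :=
      hg.comp contDiff_fst
    exact ((contDiff_snd.fst).mul (Complex.reCLM.contDiff.comp h1)).add
      ((contDiff_snd.snd).mul (Complex.imCLM.contDiff.comp h1))
  · rw [Set.eq_univ_iff_forall]
    intro v
    simp [hd0 v]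
  · intro m hm
    have pyth := Real.sin_sq_add_cos_sq (1 / m)
    have hw : ((Real.sin (1 / m), -Real.cos (1 / m)) : ℝ × ℝ) ≠ 0 := by
      intro h
      rw [Prod.ext_iff] at h
      simp only [Prod.fst_zero, Prod.snd_zero, neg_eq_zero] at h
      rw [h.1, h.2] at pyth
      norm_num at pyth
    refine ⟨?_, finrank_span_singleton hw⟩
    ext v
    obtain ⟨x, y⟩ := v
    simp only [Set.mem_setOf_eq, SetLike.mem_coe, Submodule.mem_span_singleton]
    rw [hd m hm]
    have hfm : f m ≠ 0 := by rw [hf m hm]; exact (Real.exp_pos _).ne'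
    constructor
    · intro h
      rcases mul_eq_zero.mp h with h | h
      · exact absurd h hfm
      · refine ⟨x * Real.sin (1 / m) - y * Real.cos (1 / m), ?_⟩
        rw [Prod.ext_iff]
        constructor <;> simp only [Prod.smul_fst, Prod.smul_snd, smul_eq_mul]
        · linear_combination x * pyth - Real.cos (1 / m) * h
        · linear_combination y * pyth - Real.sin (1 / m) * h
    · rintro ⟨a, ha⟩
      rw [Prod.ext_iff] at ha
      simp only [Prod.smul_fst, Prod.smul_snd, smul_eq_mul] at ha
      rw [← ha.1, ← ha.2]
      ring_nf
  · rintro ⟨G, hGc, hG⟩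
    have hπ := Real.pi_pos
    set a : ℕ → ℝ := fun k => (Real.pi / 2 + k * (2 * Real.pi))⁻¹ with ha_def
    set b : ℕ → ℝ := fun k => (((k : ℝ) + 1) * (2 * Real.pi))⁻¹ with hb_def
    have ha_pos : ∀ k : ℕ, 0 < Real.pi / 2 + k * (2 * Real.pi) := by
      intro k; positivity
    have hb_pos : ∀ k : ℕ, 0 < ((k : ℝ) + 1) * (2 * Real.pi) := by
      intro k; positivity
    have ha_ne : ∀ k, a k ≠ 0 := fun k => inv_ne_zero (ha_pos k).ne'
    have hb_ne : ∀ k, b k ≠ 0 := fun k => inv_ne_zero (hb_pos k).ne'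
    have hta : Filter.Tendsto a Filter.atTop (𝓝 0) := by
      apply tendsto_inv_atTop_zero.comp
      apply Filter.tendsto_atTop_add_const_left
      exact Filter.Tendsto.atTop_mul_const (by positivity) tendsto_natCast_atTop_atTop
    have htb : Filter.Tendsto b Filter.atTop (𝓝 0) := by
      apply tendsto_inv_atTop_zero.comp
      apply Filter.Tendsto.atTop_mul_const (by positivity)
      exact Filter.tendsto_atTop_add_const_right _ _ tendsto_natCast_atTop_atTop
    have hGa : ∀ k : ℕ, (G (a k)).submodule = Submodule.span ℝ {(((1:ℝ), (0:ℝ)) : ℝ × ℝ)} := by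
      intro k
      rw [hG _ (ha_ne k)]
      have h1 : 1 / a k = Real.pi / 2 + k * (2 * Real.pi) := by rw [one_div, ha_def, inv_inv]
      rw [h1, Real.sin_add_nat_mul_two_pi, Real.cos_add_nat_mul_two_pi, Real.sin_pi_div_two,
        Real.cos_pi_div_two]
      norm_num
    have hGb : ∀ k : ℕ, (G (b k)).submodule = Submodule.span ℝ {(((0:ℝ), (-1:ℝ)) : ℝ × ℝ)} := by
      intro k
      rw [hG _ (hb_ne k)]
      have h1 : 1 / b k = 0 + ((k + 1 : ℕ) : ℝ) * (2 * Real.pi) := by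
        rw [one_div, hb_def, inv_inv]; push_cast; ring
      rw [h1, Real.sin_add_nat_mul_two_pi, Real.cos_add_nat_mul_two_pi, Real.sin_zero,
        Real.cos_zero]
    have h10 : (((1:ℝ), (0:ℝ)) : ℝ × ℝ) ≠ 0 := by simp [Prod.ext_iff]
    have h0m1 : (((0:ℝ), (-1:ℝ)) : ℝ × ℝ) ≠ 0 := by simp [Prod.ext_iff]
    -- membership facts
    have hae1 : ∀ k, ((1, 0) : ℝ × ℝ) ∈ (G (a k)).submodule := fun k => by
      rw [hGa k]; exact Submodule.mem_span_singleton_self _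
    have hbe2 : ∀ k, ((0, 1) : ℝ × ℝ) ∈ (G (b k)).submodule := fun k => by
      rw [hGb k]; exact (mem_span_iff_2 h0m1).mpr rfl
    have hcase : ((1, 0) : ℝ × ℝ) ∉ (G 0).submodule ∨ ((0, 1) : ℝ × ℝ) ∉ (G 0).submodule := by
      by_contra hcon
      push_neg at hcon
      obtain ⟨h1, h2⟩ := hcon
      rw [Projectivization.submodule_eq, Submodule.mem_span_singleton] at h1 h2
      obtain ⟨s, hs⟩ := h1
      obtain ⟨t, ht⟩ := h2
      have hs0 : s ≠ 0 := by
        rintro rfl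
        rw [zero_smul] at hs
        rw [Prod.ext_iff] at hs
        simp at hs
      have hrep : (G 0).rep = s⁻¹ • (((1:ℝ), (0:ℝ)) : ℝ × ℝ) := by
        rw [← hs, smul_smul, inv_mul_cancel₀ hs0, one_smul]
      rw [hrep, smul_smul] at ht
      rw [Prod.ext_iff] at ht
      simp at ht
    rcases hcase with h | h
    · have hnhds : G ⁻¹' {P : Projectivization ℝ (ℝ × ℝ) | ((1, 0) : ℝ × ℝ) ∉ P.submodule}
          ∈ 𝓝 (0:ℝ) :=
        hGc.continuousAt.preimage_mem_nhds (isOpen_U1.mem_nhds h)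
      obtain ⟨k, hk⟩ := (hta.eventually hnhds).exists
      exact hk (hae1 k)
    · have hnhds : G ⁻¹' {P : Projectivization ℝ (ℝ × ℝ) | ((0, 1) : ℝ × ℝ) ∉ P.submodule}
          ∈ 𝓝 (0:ℝ) :=
        hGc.continuousAt.preimage_mem_nhds (isOpen_U2.mem_nhds h)
      obtain ⟨k, hk⟩ := (htb.eventually hnhds).exists
      exact hk (hbe2 k)
end
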